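/- arXiv:2603.24763 — 2 statements merged into one kernel-verified Lean document; each statement's English description precedes it below -/
import Mathlib

section
/- Let (X1, X2, X3, X4) be a random vector in {-1,1}^4 satisfying both X1 ⟂ X3 | (X2, X4) and X2 ⟂ X4 | (X1, X3). Then the distribution of (X1, X2, X3, X4) satisfies the global Markov property with respect to the 4-cycle graph X1 — X2 — X3 — X4 — X1: for all disjoint subsets S, T, C of {1,2,3,4} such that C separates S from T in the 4-cycle, the subvector (X_i)_{i ∈ S} is conditionally independent of (X_j)_{j ∈ T} given (X_k)_{k ∈ C}. -/
open MeasureTheory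

/-- The event that the subvector `(X_i)_{i ∈ S}` takes the values prescribed by `v`. -/
def agrees {Ω : Type*} (X : Ω → Fin 4 → ℝ) (S : Finset (Fin 4)) (v : Fin 4 → ℝ) :
    Set Ω :=
  {ω | ∀ i ∈ S, X ω i = v i}

/-- Conditional independence of the subvectors `X_S` and `X_T` given `X_C`,
for discrete (±1-valued) random vectors: the conditional pmf factorizes whenever
the conditioning value has positive probability. -/
def CondIndepSub {Ω : Type*} [MeasurableSpace Ω] (ℙ : Measure Ω)
    (X : Ω → Fin 4 → ℝ) (S T C : Finset (Fin 4)) : Prop :=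
  ∀ a t c : Fin 4 → ℝ, 0 < (ℙ (agrees X C c)).toReal →
    (ℙ (agrees X S a ∩ agrees X T t ∩ agrees X C c)).toReal /
        (ℙ (agrees X C c)).toReal =
      ((ℙ (agrees X S a ∩ agrees X C c)).toReal / (ℙ (agrees X C c)).toReal) *
        ((ℙ (agrees X T t ∩ agrees X C c)).toReal / (ℙ (agrees X C c)).toReal)

/-- The 4-cycle graph `X1 — X2 — X3 — X4 — X1` on `Fin 4`. -/
def cycleGraph : SimpleGraph (Fin 4) := SimpleGraph.fromRel (fun i j => j = i + 1)

/-- `C` separates `S` from `T`: every walk from a vertex of `S` to a vertex of `T`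
passes through a vertex of `C`. -/
def Separates (S T C : Finset (Fin 4)) : Prop :=
  ∀ u ∈ S, ∀ v ∈ T, ∀ w : cycleGraph.Walk u v, ∃ k ∈ C, k ∈ w.support

/-!
Two nonempty vertex sets of the 4-cycle can be separated by a set disjoint from both only if they
are two opposite vertices and the separator consists of the other two: adjacent vertices are
joined by a one-edge walk, and opposite ones by the two two-edge walks through the remaining
vertices. Up to swapping `S` and `T`, the global Markov property therefore reduces to the two
assumed pairwise statements; when `S` or `T` is empty it holds trivially.
-/

open Finset

section CondIndep

variable {Ω : Type*} [MeasurableSpace Ω] {ℙ : Measure Ω} {X : Ω → Fin 4 → ℝ}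
  {S T C : Finset (Fin 4)}

lemma CondIndepSub.symm (h : CondIndepSub ℙ X S T C) : CondIndepSub ℙ X T S C := by
  intro a t c hc
  rw [Set.inter_comm (agrees X T a), mul_comm]
  exact h t a c hc

lemma condIndepSub_empty_left : CondIndepSub ℙ X ∅ T C := by
  intro a t c hc
  have hA : agrees X ∅ a = Set.univ := by ext ω; simp [agrees]
  rw [hA, Set.univ_inter, Set.univ_inter, div_self hc.ne', one_mul]

end CondIndep

lemma cycleGraph_adj_iff {i j : Fin 4} : cycleGraph.Adj i j ↔ j = i + 1 ∨ i = j + 1 := by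
  simp only [cycleGraph, SimpleGraph.fromRel_adj, ne_eq, and_iff_right_iff_imp]
  rintro (rfl | rfl) <;> decide +revert

instance : DecidableRel cycleGraph.Adj := fun _ _ => decidable_of_iff' _ cycleGraph_adj_iff

section Separation

variable {S T C : Finset (Fin 4)} {u v w : Fin 4}

lemma Separates.not_adj (hsep : Separates S T C) (hSC : Disjoint S C) (hTC : Disjoint T C)
    (hu : u ∈ S) (hv : v ∈ T) : ¬ cycleGraph.Adj u v := fun huv => by
  obtain ⟨k, hkC, hk⟩ := hsep u hu v hv huv.toWalk
  rcases List.mem_pair.1 (by simpa using hk) with rfl | rfl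
  exacts [disjoint_left.1 hSC hu hkC, disjoint_left.1 hTC hv hkC]

lemma Separates.mem_of_adj_of_adj (hsep : Separates S T C) (hSC : Disjoint S C)
    (hTC : Disjoint T C) (hu : u ∈ S) (hv : v ∈ T) (huw : cycleGraph.Adj u w)
    (hwv : cycleGraph.Adj w v) : w ∈ C := by
  obtain ⟨k, hkC, hk⟩ := hsep u hu v hv (.cons huw hwv.toWalk)
  simp only [SimpleGraph.Adj.toWalk, SimpleGraph.Walk.support_cons, SimpleGraph.Walk.support_nil,
    List.mem_cons, List.not_mem_nil, or_false] at hk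
  rcases hk with rfl | rfl | rfl
  exacts [absurd hkC (disjoint_left.1 hSC hu), hkC, absurd hkC (disjoint_left.1 hTC hv)]

lemma Separates.eq_opposite (hsep : Separates S T C) (hST : Disjoint S T) (hSC : Disjoint S C)
    (hTC : Disjoint T C) (hu : u ∈ S) (hT : T.Nonempty) :
    S = {u} ∧ T = {u + 2} ∧ C = {u + 1, u + 3} := by
  obtain ⟨v, hv⟩ := hT
  have hopp : v = u + 2 := by
    have key : ∀ u v : Fin 4, u ≠ v → ¬ cycleGraph.Adj u v → v = u + 2 := by decide
    exact key u v (fun h => disjoint_left.1 hST hu (h ▸ hv)) (hsep.not_adj hSC hTC hu hv)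
  subst hopp
  have hnbrs : ∀ u : Fin 4, cycleGraph.Adj u (u + 1) ∧ cycleGraph.Adj (u + 1) (u + 2) ∧
      cycleGraph.Adj u (u + 3) ∧ cycleGraph.Adj (u + 3) (u + 2) := by decide
  obtain ⟨h01, h12, h03, h32⟩ := hnbrs u
  have h1 := hsep.mem_of_adj_of_adj hSC hTC hu hv h01 h12
  have h3 := hsep.mem_of_adj_of_adj hSC hTC hu hv h03 h32
  have hcover : ∀ u i : Fin 4, i = u ∨ i = u + 1 ∨ i = u + 2 ∨ i = u + 3 := by decide
  have hdist := (show ∀ u : Fin 4,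
      u + 1 ≠ u ∧ u + 2 ≠ u ∧ u + 3 ≠ u ∧ u + 2 ≠ u + 1 ∧ u + 3 ≠ u + 1 ∧ u + 3 ≠ u + 2 by
    decide) u
  rw [disjoint_left] at hST hSC hTC
  refine ⟨?_, ?_, ?_⟩ <;> ext i <;> rcases hcover u i with rfl | rfl | rfl | rfl <;> grind

end Separation

theorem stmt17_general {Ω : Type*} [MeasurableSpace Ω] (ℙ : Measure Ω)
    (X : Ω → Fin 4 → ℝ)
    (h13 : CondIndepSub ℙ X {0} {2} {1, 3})
    (h24 : CondIndepSub ℙ X {1} {3} {0, 2}) :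
    ∀ S T C : Finset (Fin 4),
      Disjoint S T → Disjoint S C → Disjoint T C →
      Separates S T C → CondIndepSub ℙ X S T C := by
  intro S T C hST hSC hTC hsep
  rcases S.eq_empty_or_nonempty with rfl | ⟨u, hu⟩
  · exact condIndepSub_empty_left
  rcases T.eq_empty_or_nonempty with rfl | hT
  · exact condIndepSub_empty_left.symm
  obtain ⟨rfl, rfl, rfl⟩ := hsep.eq_opposite hST hSC hTC hu hT
  fin_cases u
  · exact h13
  · rw [pair_comm]; exact h24
  · rw [pair_comm]; exact h13.symm
  · exact h24.symm

/-- If `(X1,X2,X3,X4) ∈ {-1,1}^4` satisfies `X1 ⟂ X3 | (X2,X4)` and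
`X2 ⟂ X4 | (X1,X3)`, then it satisfies the global Markov property with respect to
the 4-cycle. -/
theorem stmt17 {Ω : Type*} [MeasurableSpace Ω] (ℙ : Measure Ω)
    [IsProbabilityMeasure ℙ] (X : Ω → Fin 4 → ℝ) (hX : Measurable X)
    (hval : ∀ ω j, X ω j = 1 ∨ X ω j = -1)
    (h13 : CondIndepSub ℙ X {0} {2} {1, 3})
    (h24 : CondIndepSub ℙ X {1} {3} {0, 2}) :
    ∀ S T C : Finset (Fin 4),
      Disjoint S T → Disjoint S C → Disjoint T C →
      Separates S T C → CondIndepSub ℙ X S T C :=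
  stmt17_general ℙ X h13 h24
end

section
/- Let (U, V, W) be a random vector in [−1,1]^r × [−1,1]^s × [−1,1]^t and let Q_d denote the componentwise dyadic quantizer Q_d(x) = −1 + 2^{−d} + 2^{1−d}⌊2^{d−1}(x+1)⌋. If for every d ≥ 1 the quantized vectors satisfy Q_d(U) ⟂ Q_d(W) | Q_d(V) (conditional independence of the discrete random vectors), then U ⟂ W | V, i.e., the σ-algebras σ(U) and σ(W) are conditionally independent given σ(V). -/
open MeasureTheory

/-- The dyadic quantizer `Q_d(x) = −1 + 2^{−d} + 2^{1−d} ⌊2^{d−1}(x+1)⌋`. -/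
noncomputable def Q (d : ℕ) (x : ℝ) : ℝ :=
  -1 + (2 : ℝ) ^ (-(d : ℤ)) + (2 : ℝ) ^ (1 - (d : ℤ)) * (⌊(2 : ℝ) ^ ((d : ℤ) - 1) * (x + 1)⌋ : ℤ)

/-- Conditional independence `A ⟂ C | B` for discrete random vectors. -/
def CondIndepDiscrete {Ω α β γ : Type*} [MeasurableSpace Ω] (ℙ : Measure Ω)
    (A : Ω → α) (B : Ω → β) (C : Ω → γ) : Prop :=
  ∀ (a : α) (b : β) (c : γ), 0 < (ℙ {ω | B ω = b}).toReal →
    (ℙ {ω | A ω = a ∧ C ω = c ∧ B ω = b}).toReal / (ℙ {ω | B ω = b}).toReal =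
      ((ℙ {ω | A ω = a ∧ B ω = b}).toReal / (ℙ {ω | B ω = b}).toReal) *
        ((ℙ {ω | C ω = c ∧ B ω = b}).toReal / (ℙ {ω | B ω = b}).toReal)

section QLemmas

lemma abs_Q_sub_le (d : ℕ) (x : ℝ) : |Q d x - x| ≤ (2:ℝ)^(-(d:ℤ)) := by
  set y := (2:ℝ)^((d:ℤ)-1) * (x+1) with hy
  have hfl₁ : (⌊y⌋ : ℝ) ≤ y := Int.floor_le y
  have hfl₂ : y < ⌊y⌋ + 1 := Int.lt_floor_add_one y
  have hA : (2:ℝ)^(1-(d:ℤ)) = 2 * (2:ℝ)^(-(d:ℤ)) := by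
    rw [sub_eq_add_neg, zpow_add₀ (by norm_num : (2:ℝ) ≠ 0), zpow_one]
  have hB : (2:ℝ)^(1-(d:ℤ)) * (2:ℝ)^((d:ℤ)-1) = 1 := by
    rw [← zpow_add₀ (by norm_num : (2:ℝ) ≠ 0)]; norm_num
  have hpos : (0:ℝ) < (2:ℝ)^(-(d:ℤ)) := zpow_pos (by norm_num) _
  have hx : (2:ℝ)^(1-(d:ℤ)) * y = x + 1 := by
    rw [hy, ← mul_assoc, hB, one_mul]
  have hQ : Q d x - x = (2:ℝ)^(-(d:ℤ)) + (2:ℝ)^(1-(d:ℤ)) * ((⌊y⌋:ℝ) - y) := by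
    rw [show Q d x = -1 + (2:ℝ)^(-(d:ℤ)) + (2:ℝ)^(1-(d:ℤ)) * ((⌊y⌋:ℝ)) from by rw [hy]; rfl]
    linear_combination hx
  rw [abs_le]; constructor <;> nlinarith

lemma tendsto_Q (x : ℝ) :
    Filter.Tendsto (fun n : ℕ => Q n x) Filter.atTop (nhds x) := by
  rw [tendsto_iff_dist_tendsto_zero]
  have hb : ∀ n : ℕ, dist (Q n x) x ≤ (1/2:ℝ)^n := by
    intro n
    have := abs_Q_sub_le n x
    rw [Real.dist_eq]
    calc |Q n x - x| ≤ (2:ℝ)^(-(n:ℤ)) := this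
    _ = (1/2:ℝ)^n := by
        rw [zpow_neg, ← zpow_natCast]
        simp [one_div, inv_zpow]
  exact squeeze_zero (fun n => dist_nonneg) hb
    (tendsto_pow_atTop_nhds_zero_of_lt_one (by norm_num) (by norm_num))

lemma measurable_Q (d : ℕ) : Measurable (Q d) := by
  apply Measurable.add (measurable_const)
  apply Measurable.mul measurable_const
  exact (measurable_from_top).comp (Measurable.floor ((measurable_id.add_const 1).const_mul _))

lemma floor_half (y : ℝ) : ⌊y⌋ = ⌊2*y⌋ / 2 := by
  have h := Int.floor_le (2*y); have h2 := Int.lt_floor_add_one (2*y)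
  set m := ⌊2*y⌋ with hm
  have hd1 : 2*(m/2) ≤ m := by omega
  have hd2 : m ≤ 2*(m/2)+1 := by omega
  rw [Int.floor_eq_iff]
  constructor
  · have c1 : ((2*(m/2):ℤ):ℝ) ≤ ((m:ℤ):ℝ) := by exact_mod_cast hd1
    push_cast at c1 ⊢; linarith
  · have c2 : ((m:ℤ):ℝ) ≤ ((2*(m/2)+1:ℤ):ℝ) := by exact_mod_cast hd2
    push_cast at c2 ⊢; linarith

noncomputable def Qstep (d : ℕ) (y : ℝ) : ℝ :=
  -1 + (2:ℝ)^(-(d:ℤ)) + (2:ℝ)^(1-(d:ℤ)) *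
    ((⌊(y + 1 - (2:ℝ)^(-((d:ℤ)+1))) * 2^(d:ℤ)⌋ / 2 : ℤ) : ℝ)

lemma measurable_Qstep (d : ℕ) : Measurable (Qstep d) := by
  apply Measurable.add measurable_const
  apply Measurable.mul measurable_const
  have h1 : Measurable fun a : ℝ => ⌊(a + 1 - (2:ℝ)^(-((d:ℤ)+1))) * 2^(d:ℤ)⌋ :=
    Measurable.floor (((measurable_id.add_const _).sub_const _).mul_const _)
  exact (measurable_from_top (f := fun k : ℤ => ((k/2 : ℤ) : ℝ))).comp h1

lemma Qstep_Q (d : ℕ) (x : ℝ) : Qstep d (Q (d+1) x) = Q d x := by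
  have hne : (2:ℝ) ≠ 0 := by norm_num
  have hcast : (((d:ℕ)+1 : ℕ) : ℤ) = (d:ℤ)+1 := by push_cast; ring
  set k : ℤ := ⌊(2:ℝ)^((d:ℤ)) * (x+1)⌋ with hk
  have h1 : (Q (d+1) x + 1 - (2:ℝ)^(-((d:ℤ)+1))) * 2^(d:ℤ) = (k:ℝ) := by
    simp only [Q, hcast]
    have e1 : ((d:ℤ)+1-1) = (d:ℤ) := by ring
    rw [e1]
    have e2 : (1-((d:ℤ)+1)) = -(d:ℤ) := by ring
    rw [e2]
    have e3 : (2:ℝ)^(-(d:ℤ)) * (2:ℝ)^((d:ℤ)) = 1 := by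
      rw [← zpow_add₀ hne]; norm_num
    rw [← hk]; linear_combination (k:ℝ) * e3
  simp only [Qstep, h1, Int.floor_intCast]
  have h2 : k / 2 = ⌊(2:ℝ)^((d:ℤ)-1) * (x+1)⌋ := by
    rw [hk, floor_half ((2:ℝ)^((d:ℤ)-1) * (x+1))]
    congr 2
    have hsplit : (2:ℝ)^(d:ℤ) = 2 * (2:ℝ)^((d:ℤ)-1) := by
      have e : (1 + ((d:ℤ)-1)) = (d:ℤ) := by ring
      calc (2:ℝ)^(d:ℤ) = 2^(1+((d:ℤ)-1)) := by rw [e]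
      _ = 2^(1:ℤ) * 2^((d:ℤ)-1) := zpow_add₀ hne 1 _
      _ = 2 * 2^((d:ℤ)-1) := by norm_num
    rw [hsplit]; ring
  rw [h2]; rfl

lemma finite_Q_image (d : ℕ) : (Q d '' Set.Icc (-1:ℝ) 1).Finite := by
  apply Set.Finite.subset (Set.Finite.image
    (fun k : ℤ => -1 + (2:ℝ)^(-(d:ℤ)) + (2:ℝ)^(1-(d:ℤ)) * k) (Set.finite_Icc (0:ℤ) (2^d)))
  rintro - ⟨x, hx, rfl⟩
  refine ⟨⌊(2:ℝ)^((d:ℤ)-1) * (x+1)⌋, ?_, rfl⟩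
  have hp : (0:ℝ) < (2:ℝ)^((d:ℤ)-1) := zpow_pos (by norm_num) _
  have hy1 : (0:ℝ) ≤ (2:ℝ)^((d:ℤ)-1) * (x+1) := by nlinarith [hx.1]
  have hy2 : (2:ℝ)^((d:ℤ)-1) * (x+1) ≤ (2:ℝ)^(d:ℤ) := by
    have : (2:ℝ)^((d:ℤ)-1) * 2 = (2:ℝ)^(d:ℤ) := by
      have e : (((d:ℤ)-1) + 1) = (d:ℤ) := by ring
      calc (2:ℝ)^((d:ℤ)-1) * 2 = 2^((d:ℤ)-1) * 2^(1:ℤ) := by norm_num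
      _ = 2^(((d:ℤ)-1)+1) := (zpow_add₀ (by norm_num : (2:ℝ) ≠ 0) _ 1).symm
      _ = (2:ℝ)^(d:ℤ) := by rw [e]
    nlinarith [hx.2]
  constructor
  · exact Int.le_floor.2 (by exact_mod_cast hy1)
  · have : ((⌊(2:ℝ)^((d:ℤ)-1) * (x+1)⌋ : ℤ) : ℝ) ≤ ((2^d : ℤ) : ℝ) := by
      push_cast
      calc ((⌊(2:ℝ)^((d:ℤ)-1) * (x+1)⌋ : ℤ) : ℝ) ≤ (2:ℝ)^((d:ℤ)-1) * (x+1) := Int.floor_le _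
      _ ≤ (2:ℝ)^(d:ℤ) := hy2
      _ = (2:ℝ)^(d:ℕ) := by rw [zpow_natCast]
    exact_mod_cast this

end QLemmas

section Helpers

variable {Ω : Type*} [m0 : MeasurableSpace Ω]

/-- If `h = φ ∘ g` with `φ` measurable then `σ(h) ≤ σ(g)`. -/
lemma aux_comap_mono_of_comp {β γ : Type*} [MeasurableSpace β] [MeasurableSpace γ]
    {g : Ω → β} {h : Ω → γ} {φ : β → γ} (hφ : Measurable φ) (hgh : ∀ ω, h ω = φ (g ω)) :
    MeasurableSpace.comap h inferInstance ≤ MeasurableSpace.comap g inferInstance := by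
  have he : h = φ ∘ g := funext hgh
  rw [he, ← MeasurableSpace.comap_comp]
  exact MeasurableSpace.comap_mono hφ.comap_le

/-- A `σ(g)`-measurable real function is constant on fibers of `g`. -/
lemma aux_const_on_fibers {β : Type*} [MeasurableSpace β] {g : Ω → β} {h : Ω → ℝ}
    (hh : Measurable[MeasurableSpace.comap g inferInstance] h) {ω ω' : Ω}
    (he : g ω = g ω') : h ω = h ω' := by
  have hm := hh (measurableSet_singleton (h ω))
  obtain ⟨t, -, hpre⟩ := hm
  have h1 : ω ∈ g ⁻¹' t := by
    rw [show g ⁻¹' t = h ⁻¹' {h ω} from hpre]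
    exact rfl
  have h2 : ω' ∈ g ⁻¹' t := by
    simp only [Set.mem_preimage, ← he]; exact h1
  have h3 : ω' ∈ h ⁻¹' {h ω} := by rwa [show g ⁻¹' t = h ⁻¹' {h ω} from hpre] at h2
  exact h3.symm

/-- Decomposition of the measure of `g⁻¹(T) ∩ S` over the finitely many fibers. -/
lemma aux_measure_sum {β : Type*} (μ : Measure Ω) [IsFiniteMeasure μ]
    {g : Ω → β} {F : Finset β} (hF : ∀ ω, g ω ∈ F) (T : Set β) (S : Set Ω)
    (hmeas : ∀ b, MeasurableSet (g ⁻¹' {b} ∩ S)) [DecidablePred (· ∈ T)] :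
    (μ (g ⁻¹' T ∩ S)).toReal
      = ∑ b ∈ F.filter (fun b => b ∈ T), (μ (g ⁻¹' {b} ∩ S)).toReal := by
  have hdecomp : g ⁻¹' T ∩ S = ⋃ b ∈ F.filter (fun b => b ∈ T), (g ⁻¹' {b} ∩ S) := by
    ext ω
    simp only [Set.mem_iUnion, Set.mem_inter_iff, Set.mem_preimage, Set.mem_singleton_iff,
      Finset.mem_filter, exists_prop]
    constructor
    · rintro ⟨hT, hS⟩; exact ⟨g ω, ⟨hF ω, hT⟩, rfl, hS⟩
    · rintro ⟨b, ⟨-, hbT⟩, hgb, hS⟩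
      exact ⟨by rwa [hgb], hS⟩
  rw [hdecomp, measure_biUnion_finset ?_ (fun b _ => hmeas b),
    ENNReal.toReal_sum (fun _ _ => measure_ne_top _ _)]
  intro b _ c _ hbc
  refine Set.disjoint_left.2 ?_
  rintro ω ⟨hb1, -⟩ ⟨hc1, -⟩
  exact hbc ((Set.mem_singleton_iff.1 hb1).symm.trans (Set.mem_singleton_iff.1 hc1))

/-- Decomposition of a set integral over `g⁻¹(T)` over the finitely many fibers. -/
lemma aux_setIntegral_sum {β : Type*} (μ : Measure Ω) [IsFiniteMeasure μ]
    {g : Ω → β} {F : Finset β} (hF : ∀ ω, g ω ∈ F) (T : Set β)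
    (hmeas : ∀ b, MeasurableSet (g ⁻¹' {b})) {f : Ω → ℝ} (hf : Integrable f μ)
    [DecidablePred (· ∈ T)] :
    ∫ ω in g ⁻¹' T, f ω ∂μ
      = ∑ b ∈ F.filter (fun b => b ∈ T), ∫ ω in g ⁻¹' {b}, f ω ∂μ := by
  have hdecomp : g ⁻¹' T = ⋃ b ∈ F.filter (fun b => b ∈ T), g ⁻¹' {b} := by
    ext ω
    simp only [Set.mem_iUnion, Set.mem_preimage, Set.mem_singleton_iff,
      Finset.mem_filter, exists_prop]
    constructor
    · intro hT; exact ⟨g ω, ⟨hF ω, hT⟩, rfl⟩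
    · rintro ⟨b, ⟨-, hbT⟩, hgb⟩; rwa [hgb]
  rw [hdecomp]
  refine integral_biUnion_finset _ (fun b _ => hmeas b) ?_ (fun b _ => hf.integrableOn)
  intro b _ c _ hbc
  refine Set.disjoint_left.2 ?_
  intro ω hb1 hc1
  exact hbc ((Set.mem_singleton_iff.1 hb1).symm.trans (Set.mem_singleton_iff.1 hc1))

lemma aux_setIntegral_indicator_one (μ : Measure Ω) [IsFiniteMeasure μ]
    {A : Set Ω} (hA : MeasurableSet A) (S : Set Ω) :
    ∫ ω in S, A.indicator (fun _ => (1:ℝ)) ω ∂μ = (μ (A ∩ S)).toReal := by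
  rw [setIntegral_indicator hA, setIntegral_const, smul_eq_mul, mul_one, Set.inter_comm, measureReal_def]

lemma aux_condexp_indicator_bounds (μ : Measure Ω) [IsProbabilityMeasure μ]
    {m : MeasurableSpace Ω} (hm : m ≤ m0) {A : Set Ω}
    (hint : Integrable (A.indicator (fun _ => (1:ℝ))) μ) :
    ∀ᵐ ω ∂μ, 0 ≤ (μ[A.indicator (fun _ => (1:ℝ))|m]) ω ∧
      (μ[A.indicator (fun _ => (1:ℝ))|m]) ω ≤ 1 := by
  have h0 : (0:Ω → ℝ) ≤ᵐ[μ] μ[A.indicator (fun _ => (1:ℝ))|m] :=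
    condExp_nonneg (Filter.Eventually.of_forall fun ω =>
      Set.indicator_nonneg (fun _ _ => zero_le_one) ω)
  have h1 : μ[A.indicator (fun _ => (1:ℝ))|m] ≤ᵐ[μ] μ[(fun _ => (1:ℝ))|m] :=
    condExp_mono hint (integrable_const (1:ℝ))
      (Filter.Eventually.of_forall fun ω => Set.indicator_le_self' (fun _ _ => zero_le_one) ω)
  have h2 : μ[(fun _ => (1:ℝ))|m] = fun _ => (1:ℝ) := condExp_const hm 1
  filter_upwards [h0, h1] with ω hω0 hω1
  exact ⟨hω0, by rw [h2] at hω1; exact hω1⟩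

lemma aux_condexp_indicator_norm_le (μ : Measure Ω) [IsProbabilityMeasure μ]
    {m : MeasurableSpace Ω} (hm : m ≤ m0) {A : Set Ω}
    (hint : Integrable (A.indicator (fun _ => (1:ℝ))) μ) :
    ∀ᵐ ω ∂μ, ‖(μ[A.indicator (fun _ => (1:ℝ))|m]) ω‖ ≤ 1 := by
  filter_upwards [aux_condexp_indicator_bounds (m0 := m0) μ hm hint] with ω hω
  rw [Real.norm_eq_abs, abs_le]
  exact ⟨by linarith [hω.1], hω.2⟩

end Helpers

/-- If the componentwise dyadic quantizations satisfy
`Q_d(U) ⟂ Q_d(W) | Q_d(V)` for every `d ≥ 1`, then `U ⟂ W | V`: the σ-algebras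
`σ(U)` and `σ(W)` are conditionally independent given `σ(V)`, in the sense that
`E[1_A 1_C | σ(V)] = E[1_A | σ(V)] E[1_C | σ(V)]` a.s. for all `A ∈ σ(U)`, `C ∈ σ(W)`. -/
theorem stmt19 {Ω : Type*} [m0 : MeasurableSpace Ω] (ℙ : Measure Ω)
    [IsProbabilityMeasure ℙ] (r s t : ℕ)
    (U : Ω → Fin r → ℝ) (V : Ω → Fin s → ℝ) (W : Ω → Fin t → ℝ)
    (hU : Measurable U) (hV : Measurable V) (hW : Measurable W)
    (hvalU : ∀ ω j, U ω j ∈ Set.Icc (-1 : ℝ) 1)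
    (hvalV : ∀ ω j, V ω j ∈ Set.Icc (-1 : ℝ) 1)
    (hvalW : ∀ ω j, W ω j ∈ Set.Icc (-1 : ℝ) 1)
    (hCI : ∀ d : ℕ, 1 ≤ d →
      CondIndepDiscrete ℙ (fun ω j => Q d (U ω j)) (fun ω j => Q d (V ω j))
        (fun ω j => Q d (W ω j))) :
    ∀ sA : Set Ω, MeasurableSet[MeasurableSpace.comap U inferInstance] sA →
    ∀ sC : Set Ω, MeasurableSet[MeasurableSpace.comap W inferInstance] sC →
      (ℙ[fun ω => sA.indicator (fun _ => (1 : ℝ)) ω * sC.indicator (fun _ => (1 : ℝ)) ω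
          | MeasurableSpace.comap V inferInstance])
        =ᵐ[ℙ]
      fun ω =>
        (ℙ[sA.indicator (fun _ => (1 : ℝ)) | MeasurableSpace.comap V inferInstance]) ω *
        (ℙ[sC.indicator (fun _ => (1 : ℝ)) | MeasurableSpace.comap V inferInstance]) ω := by
  classical
  -- generic facts about quantized σ-algebras
  have gen : ∀ (k : ℕ) (X : Ω → Fin k → ℝ), Measurable X →
      (∀ ω j, X ω j ∈ Set.Icc (-1 : ℝ) 1) →
      (∀ n, Measurable (fun ω (j : Fin k) => Q n (X ω j))) ∧
      (Monotone (fun n => MeasurableSpace.comap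
        (fun ω (j : Fin k) => Q (n+1) (X ω j)) inferInstance)) ∧
      (∀ n, MeasurableSpace.comap (fun ω (j : Fin k) => Q n (X ω j)) inferInstance ≤
        MeasurableSpace.comap X inferInstance) ∧
      ((⨆ n, MeasurableSpace.comap (fun ω (j : Fin k) => Q (n+1) (X ω j)) inferInstance) =
        MeasurableSpace.comap X inferInstance) ∧
      (∀ n, (Set.range (fun ω (j : Fin k) => Q n (X ω j))).Finite) := by
    intro k X hX hval
    have hQmeas : ∀ n, Measurable (fun ω (j : Fin k) => Q n (X ω j)) := fun n =>
      measurable_pi_lambda _ fun j => (measurable_Q n).comp ((measurable_pi_apply j).comp hX)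
    have hle : ∀ n, MeasurableSpace.comap (fun ω (j : Fin k) => Q n (X ω j)) inferInstance ≤
        MeasurableSpace.comap X inferInstance := by
      intro n
      exact aux_comap_mono_of_comp (φ := fun f : Fin k → ℝ => fun j => Q n (f j))
        (measurable_pi_lambda _ fun j => (measurable_Q n).comp (measurable_pi_apply j))
        (fun ω => rfl)
    have hmono : Monotone (fun n => MeasurableSpace.comap
        (fun ω (j : Fin k) => Q (n+1) (X ω j)) inferInstance) := by
      apply monotone_nat_of_le_succ
      intro n
      exact aux_comap_mono_of_comp (φ := fun f : Fin k → ℝ => fun j => Qstep (n+1) (f j))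
        (measurable_pi_lambda _ fun j => (measurable_Qstep _).comp (measurable_pi_apply j))
        (fun ω => by funext j; exact (Qstep_Q (n+1) (X ω j)).symm)
    refine ⟨hQmeas, hmono, hle, ?_, ?_⟩
    · refine le_antisymm (iSup_le fun n => hle (n+1)) ?_
      have hXm : Measurable[⨆ n, MeasurableSpace.comap
          (fun ω (j : Fin k) => Q (n+1) (X ω j)) inferInstance] X := by
        refine @measurable_of_tendsto_metrizable Ω (Fin k → ℝ)
          (⨆ n, MeasurableSpace.comap (fun ω (j : Fin k) => Q (n+1) (X ω j)) inferInstance)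
          _ _ _ _ (fun n ω (j : Fin k) => Q (n+1) (X ω j)) X (fun n => ?_) ?_
        · exact (Measurable.of_comap_le (le_iSup (fun n => MeasurableSpace.comap
            (fun ω (j : Fin k) => Q (n+1) (X ω j)) inferInstance) n))
        · rw [tendsto_pi_nhds]
          intro ω
          rw [tendsto_pi_nhds]
          intro j
          exact (tendsto_Q (X ω j)).comp (Filter.tendsto_add_atTop_nat 1)
      exact hXm.comap_le
    · intro n
      apply Set.Finite.subset (Set.Finite.pi' (fun _ : Fin k => finite_Q_image n))
      rintro - ⟨ω, rfl⟩
      exact fun j => ⟨X ω j, hval ω j, rfl⟩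
  obtain ⟨hQUmeas, hmonoU, hleU, hsupU, hfinU⟩ := gen r U hU hvalU
  obtain ⟨hQVmeas, hmonoV, hleV, hsupV, hfinV⟩ := gen s V hV hvalV
  obtain ⟨hQWmeas, hmonoW, hleW, hsupW, hfinW⟩ := gen t W hW hvalW
  set 𝓐 : ℕ → MeasurableSpace Ω := fun n => MeasurableSpace.comap
    (fun ω (j : Fin r) => Q (n+1) (U ω j)) inferInstance with h𝓐def
  set 𝓑 : ℕ → MeasurableSpace Ω := fun n => MeasurableSpace.comap
    (fun ω (j : Fin s) => Q (n+1) (V ω j)) inferInstance with h𝓑def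
  set 𝓒 : ℕ → MeasurableSpace Ω := fun n => MeasurableSpace.comap
    (fun ω (j : Fin t) => Q (n+1) (W ω j)) inferInstance with h𝓒def
  have hmUle : MeasurableSpace.comap U inferInstance ≤ m0 := hU.comap_le
  have hmVle : MeasurableSpace.comap V inferInstance ≤ m0 := hV.comap_le
  have hmWle : MeasurableSpace.comap W inferInstance ≤ m0 := hW.comap_le
  have h𝓐le : ∀ n, 𝓐 n ≤ m0 := fun n => (hleU (n+1)).trans hmUle
  have h𝓑le : ∀ n, 𝓑 n ≤ m0 := fun n => (hleV (n+1)).trans hmVle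
  have h𝓒le : ∀ n, 𝓒 n ≤ m0 := fun n => (hleW (n+1)).trans hmWle
  -- Step A: conditional independence of level-(n+1) σ-algebras given 𝓑 n.
  have stepA : ∀ (n : ℕ) (A C : Set Ω), MeasurableSet[𝓐 n] A → MeasurableSet[𝓒 n] C →
      (fun ω => (ℙ[A.indicator (fun _ => (1:ℝ))|𝓑 n]) ω *
        (ℙ[C.indicator (fun _ => (1:ℝ))|𝓑 n]) ω)
        =ᵐ[ℙ] ℙ[(A ∩ C).indicator (fun _ => (1:ℝ))|𝓑 n] := by
    intro n A C hA hC
    have hAm0 : MeasurableSet A := h𝓐le n A hA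
    have hCm0 : MeasurableSet C := h𝓒le n C hC
    obtain ⟨TA, -, hTA⟩ := hA
    obtain ⟨TC, -, hTC⟩ := hC
    have hQU : Measurable (fun ω (j : Fin r) => Q (n+1) (U ω j)) := hQUmeas (n+1)
    have hQV : Measurable (fun ω (j : Fin s) => Q (n+1) (V ω j)) := hQVmeas (n+1)
    have hQW : Measurable (fun ω (j : Fin t) => Q (n+1) (W ω j)) := hQWmeas (n+1)
    set QU : Ω → Fin r → ℝ := fun ω j => Q (n+1) (U ω j) with hQUdef
    set QV : Ω → Fin s → ℝ := fun ω j => Q (n+1) (V ω j) with hQVdef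
    set QW : Ω → Fin t → ℝ := fun ω j => Q (n+1) (W ω j) with hQWdef
    have hSbm0 : ∀ b : Fin s → ℝ, MeasurableSet (QV ⁻¹' {b}) :=
      fun b => hQV (measurableSet_singleton b)
    have hSbB : ∀ b : Fin s → ℝ, MeasurableSet[𝓑 n] (QV ⁻¹' {b}) :=
      fun b => ⟨{b}, measurableSet_singleton b, rfl⟩
    have hFU : ∀ ω, QU ω ∈ (hfinU (n+1)).toFinset :=
      fun ω => (Set.Finite.mem_toFinset _).2 ⟨ω, rfl⟩
    have hFV : ∀ ω, QV ω ∈ (hfinV (n+1)).toFinset :=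
      fun ω => (Set.Finite.mem_toFinset _).2 ⟨ω, rfl⟩
    have hFW : ∀ ω, QW ω ∈ (hfinW (n+1)).toFinset :=
      fun ω => (Set.Finite.mem_toFinset _).2 ⟨ω, rfl⟩
    -- the key measure identity on positive fibers
    have key : ∀ b : Fin s → ℝ, ℙ (QV ⁻¹' {b}) ≠ 0 →
        (ℙ (A ∩ C ∩ QV ⁻¹' {b})).toReal =
        (ℙ (A ∩ QV ⁻¹' {b})).toReal * (ℙ (C ∩ QV ⁻¹' {b})).toReal
          / (ℙ (QV ⁻¹' {b})).toReal := by
      intro b hb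
      have hbpos : 0 < (ℙ (QV ⁻¹' {b})).toReal :=
        ENNReal.toReal_pos hb (measure_ne_top _ _)
      have hbne : (ℙ (QV ⁻¹' {b})).toReal ≠ 0 := hbpos.ne'
      have hACb : (ℙ (A ∩ C ∩ QV ⁻¹' {b})).toReal
          = ∑ a ∈ (hfinU (n+1)).toFinset.filter (fun a => a ∈ TA),
              (ℙ (QU ⁻¹' {a} ∩ (C ∩ QV ⁻¹' {b}))).toReal := by
        rw [show A ∩ C ∩ QV ⁻¹' {b} = QU ⁻¹' TA ∩ (C ∩ QV ⁻¹' {b}) from by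
          rw [hTA, Set.inter_assoc]]
        exact aux_measure_sum ℙ hFU TA _ (fun a =>
          (hQU (measurableSet_singleton a)).inter (hCm0.inter (hSbm0 b)))
      have hinner : ∀ a : Fin r → ℝ,
          (ℙ (QU ⁻¹' {a} ∩ (C ∩ QV ⁻¹' {b}))).toReal
          = ∑ c ∈ (hfinW (n+1)).toFinset.filter (fun c => c ∈ TC),
              (ℙ (QW ⁻¹' {c} ∩ (QU ⁻¹' {a} ∩ QV ⁻¹' {b}))).toReal := by
        intro a
        rw [show QU ⁻¹' {a} ∩ (C ∩ QV ⁻¹' {b})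
            = QW ⁻¹' TC ∩ (QU ⁻¹' {a} ∩ QV ⁻¹' {b}) from by
          rw [← hTC]; ext ω; simp only [Set.mem_inter_iff, Set.mem_preimage]; tauto]
        exact aux_measure_sum ℙ hFW TC _ (fun c =>
          (hQW (measurableSet_singleton c)).inter
            ((hQU (measurableSet_singleton a)).inter (hSbm0 b)))
      have hAb : (ℙ (A ∩ QV ⁻¹' {b})).toReal
          = ∑ a ∈ (hfinU (n+1)).toFinset.filter (fun a => a ∈ TA),
              (ℙ (QU ⁻¹' {a} ∩ QV ⁻¹' {b})).toReal := by
        rw [← hTA]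
        exact aux_measure_sum ℙ hFU TA _ (fun a =>
          (hQU (measurableSet_singleton a)).inter (hSbm0 b))
      have hCb : (ℙ (C ∩ QV ⁻¹' {b})).toReal
          = ∑ c ∈ (hfinW (n+1)).toFinset.filter (fun c => c ∈ TC),
              (ℙ (QW ⁻¹' {c} ∩ QV ⁻¹' {b})).toReal := by
        rw [← hTC]
        exact aux_measure_sum ℙ hFW TC _ (fun c =>
          (hQW (measurableSet_singleton c)).inter (hSbm0 b))
      rw [hACb, hAb, hCb, eq_div_iff hbne, Finset.sum_mul, Finset.sum_mul_sum]
      refine Finset.sum_congr rfl (fun a _ => ?_)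
      rw [hinner a, Finset.sum_mul]
      refine Finset.sum_congr rfl (fun c _ => ?_)
      -- use the discrete CI hypothesis
      have hbpos' : 0 < (ℙ {ω | QV ω = b}).toReal := by
        convert hbpos using 3
        rfl
      have hci := hCI (n+1) (Nat.le_add_left 1 n) a b c hbpos'
      have e1 : {ω | QU ω = a ∧ QW ω = c ∧ QV ω = b}
          = QW ⁻¹' {c} ∩ (QU ⁻¹' {a} ∩ QV ⁻¹' {b}) := by
        ext ω; simp only [Set.mem_setOf_eq, Set.mem_inter_iff, Set.mem_preimage,
          Set.mem_singleton_iff]; tauto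
      have e2 : {ω | QU ω = a ∧ QV ω = b} = QU ⁻¹' {a} ∩ QV ⁻¹' {b} := by
        ext ω; simp only [Set.mem_setOf_eq, Set.mem_inter_iff, Set.mem_preimage,
          Set.mem_singleton_iff]
      have e3 : {ω | QW ω = c ∧ QV ω = b} = QW ⁻¹' {c} ∩ QV ⁻¹' {b} := by
        ext ω; simp only [Set.mem_setOf_eq, Set.mem_inter_iff, Set.mem_preimage,
          Set.mem_singleton_iff]
      have e4 : {ω | QV ω = b} = QV ⁻¹' {b} := rfl
      rw [e1, e2, e3, e4] at hci
      have hbne2 : (ℙ (QV ⁻¹' {b})).toReal * (ℙ (QV ⁻¹' {b})).toReal ≠ 0 :=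
        mul_ne_zero hbne hbne
      rw [div_mul_div_comm, div_eq_div_iff hbne hbne2] at hci
      apply mul_right_cancel₀ hbne
      linear_combination hci
    -- now the conditional expectation identity
    have hintA : Integrable (A.indicator (fun _ => (1:ℝ))) ℙ :=
      (integrable_const (1:ℝ)).indicator hAm0
    have hintC : Integrable (C.indicator (fun _ => (1:ℝ))) ℙ :=
      (integrable_const (1:ℝ)).indicator hCm0
    have hintAC : Integrable ((A ∩ C).indicator (fun _ => (1:ℝ))) ℙ :=
      (integrable_const (1:ℝ)).indicator (hAm0.inter hCm0)
    have hgA_sm : StronglyMeasurable[𝓑 n] (ℙ[A.indicator (fun _ => (1:ℝ))|𝓑 n]) :=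
      stronglyMeasurable_condExp
    have hgC_sm : StronglyMeasurable[𝓑 n] (ℙ[C.indicator (fun _ => (1:ℝ))|𝓑 n]) :=
      stronglyMeasurable_condExp
    refine ae_eq_condExp_of_forall_setIntegral_eq (h𝓑le n) hintAC
      (fun S _ _ => (Integrable.bdd_mul (c := 1) integrable_condExp
        ((hgA_sm.mono (h𝓑le n)).aestronglyMeasurable)
        (aux_condexp_indicator_norm_le ℙ (h𝓑le n) ((integrable_const (1:ℝ)).indicator hAm0))).integrableOn) ?_ ?_
    · -- set integral equality over 𝓑 n sets
      intro S hS _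
      obtain ⟨T, -, hT⟩ := hS
      have hint_mul : Integrable (fun ω => (ℙ[A.indicator (fun _ => (1:ℝ))|𝓑 n]) ω *
          (ℙ[C.indicator (fun _ => (1:ℝ))|𝓑 n]) ω) ℙ :=
        Integrable.bdd_mul (c := 1) integrable_condExp
          ((hgA_sm.mono (h𝓑le n)).aestronglyMeasurable)
          (aux_condexp_indicator_norm_le ℙ (h𝓑le n) ((integrable_const (1:ℝ)).indicator hAm0))
      rw [← hT]
      rw [aux_setIntegral_sum ℙ hFV T hSbm0 hint_mul,
        aux_setIntegral_sum ℙ hFV T hSbm0 hintAC]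
      refine Finset.sum_congr rfl (fun b _ => ?_)
      by_cases hb : ℙ (QV ⁻¹' {b}) = 0
      · simp [Measure.restrict_eq_zero.2 hb]
      · -- positive fiber
        have hbpos : 0 < (ℙ (QV ⁻¹' {b})).toReal :=
          ENNReal.toReal_pos hb (measure_ne_top _ _)
        obtain ⟨ω0, hω0⟩ : (QV ⁻¹' {b}).Nonempty := by
          rw [Set.nonempty_iff_ne_empty]
          intro hemp
          exact hb (by rw [hemp]; exact measure_empty)
        have hω0b : QV ω0 = b := hω0
        have hconstA : ∀ ω' ∈ QV ⁻¹' {b},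
            (ℙ[A.indicator (fun _ => (1:ℝ))|𝓑 n]) ω'
              = (ℙ[A.indicator (fun _ => (1:ℝ))|𝓑 n]) ω0 := by
          intro ω' hω'
          exact aux_const_on_fibers hgA_sm.measurable
            ((Set.mem_singleton_iff.1 hω').trans hω0b.symm)
        have hconstC : ∀ ω' ∈ QV ⁻¹' {b},
            (ℙ[C.indicator (fun _ => (1:ℝ))|𝓑 n]) ω'
              = (ℙ[C.indicator (fun _ => (1:ℝ))|𝓑 n]) ω0 := by
          intro ω' hω'
          exact aux_const_on_fibers hgC_sm.measurable
            ((Set.mem_singleton_iff.1 hω').trans hω0b.symm)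
        have hvalA : (ℙ[A.indicator (fun _ => (1:ℝ))|𝓑 n]) ω0 * (ℙ (QV ⁻¹' {b})).toReal
            = (ℙ (A ∩ QV ⁻¹' {b})).toReal := by
          have h5 := setIntegral_condExp (h𝓑le n) hintA (hSbB b)
          rw [aux_setIntegral_indicator_one ℙ hAm0] at h5
          rw [← h5]
          rw [setIntegral_congr_fun (hSbm0 b) (fun ω' hω' => hconstA ω' hω'),
            setIntegral_const, smul_eq_mul, mul_comm, measureReal_def]
        have hvalC : (ℙ[C.indicator (fun _ => (1:ℝ))|𝓑 n]) ω0 * (ℙ (QV ⁻¹' {b})).toReal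
            = (ℙ (C ∩ QV ⁻¹' {b})).toReal := by
          have h5 := setIntegral_condExp (h𝓑le n) hintC (hSbB b)
          rw [aux_setIntegral_indicator_one ℙ hCm0] at h5
          rw [← h5]
          rw [setIntegral_congr_fun (hSbm0 b) (fun ω' hω' => hconstC ω' hω'),
            setIntegral_const, smul_eq_mul, mul_comm, measureReal_def]
        have hLHS : ∫ ω in QV ⁻¹' {b}, (ℙ[A.indicator (fun _ => (1:ℝ))|𝓑 n]) ω *
            (ℙ[C.indicator (fun _ => (1:ℝ))|𝓑 n]) ω ∂ℙ
            = (ℙ (QV ⁻¹' {b})).toReal * ((ℙ[A.indicator (fun _ => (1:ℝ))|𝓑 n]) ω0 *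
              (ℙ[C.indicator (fun _ => (1:ℝ))|𝓑 n]) ω0) := by
          rw [setIntegral_congr_fun (hSbm0 b)
            (fun ω' hω' => by rw [hconstA ω' hω', hconstC ω' hω']), setIntegral_const,
            smul_eq_mul, measureReal_def]
        have hRHS : ∫ ω in QV ⁻¹' {b}, (A ∩ C).indicator (fun _ => (1:ℝ)) ω ∂ℙ
            = (ℙ (A ∩ C ∩ QV ⁻¹' {b})).toReal := by
          rw [aux_setIntegral_indicator_one ℙ (hAm0.inter hCm0)]
        rw [hLHS, hRHS, key b hb]
        have hbne : (ℙ (QV ⁻¹' {b})).toReal ≠ 0 := hbpos.ne'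
        rw [eq_div_iff hbne]
        linear_combination ((ℙ[C.indicator (fun _ => (1:ℝ))|𝓑 n]) ω0 *
            (ℙ (QV ⁻¹' {b})).toReal) * hvalA +
          (ℙ (A ∩ QV ⁻¹' {b})).toReal * hvalC
    · exact (hgA_sm.mul hgC_sm).aestronglyMeasurable
  -- the filtration of quantized V σ-algebras
  let ℱ : Filtration ℕ m0 := ⟨𝓑, hmonoV, fun n => h𝓑le n⟩
  -- Step B: pass to the limit via Lévy's upward theorem
  have stepB : ∀ (d : ℕ) (A C : Set Ω), MeasurableSet[𝓐 d] A → MeasurableSet[𝓒 d] C →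
      (fun ω => (ℙ[A.indicator (fun _ => (1:ℝ))|MeasurableSpace.comap V inferInstance]) ω *
        (ℙ[C.indicator (fun _ => (1:ℝ))|MeasurableSpace.comap V inferInstance]) ω)
        =ᵐ[ℙ] ℙ[(A ∩ C).indicator (fun _ => (1:ℝ))|MeasurableSpace.comap V inferInstance] := by
    intro d A C hA hC
    have hsupF : (⨆ n, ℱ n) = MeasurableSpace.comap V inferInstance := hsupV
    have h1 := tendsto_ae_condExp (ℱ := ℱ) (μ := ℙ) ((A ∩ C).indicator (fun _ => (1:ℝ)))
    have h2 := tendsto_ae_condExp (ℱ := ℱ) (μ := ℙ) (A.indicator (fun _ => (1:ℝ)))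
    have h3 := tendsto_ae_condExp (ℱ := ℱ) (μ := ℙ) (C.indicator (fun _ => (1:ℝ)))
    rw [hsupF] at h1 h2 h3
    have heq : ∀ m : ℕ, (fun ω => (ℙ[A.indicator (fun _ => (1:ℝ))|ℱ (m + d)]) ω *
        (ℙ[C.indicator (fun _ => (1:ℝ))|ℱ (m + d)]) ω)
        =ᵐ[ℙ] ℙ[(A ∩ C).indicator (fun _ => (1:ℝ))|ℱ (m + d)] := fun m =>
      stepA (m + d) A C (hmonoU (Nat.le_add_left d m) A hA)
        (hmonoW (Nat.le_add_left d m) C hC)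
    have heq' : ∀ᵐ ω ∂ℙ, ∀ m : ℕ,
        (ℙ[A.indicator (fun _ => (1:ℝ))|ℱ (m + d)]) ω *
          (ℙ[C.indicator (fun _ => (1:ℝ))|ℱ (m + d)]) ω
        = (ℙ[(A ∩ C).indicator (fun _ => (1:ℝ))|ℱ (m + d)]) ω := by
      rw [ae_all_iff]
      exact fun m => heq m
    filter_upwards [h1, h2, h3, heq'] with ω hω1 hω2 hω3 hωeq
    have t1 : Filter.Tendsto (fun m : ℕ =>
        (ℙ[(A ∩ C).indicator (fun _ => (1:ℝ))|ℱ (m + d)]) ω) Filter.atTop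
        (nhds ((ℙ[(A ∩ C).indicator (fun _ => (1:ℝ))|MeasurableSpace.comap V inferInstance]) ω)) :=
      hω1.comp (Filter.tendsto_add_atTop_nat d)
    have t2 : Filter.Tendsto (fun m : ℕ =>
        (ℙ[A.indicator (fun _ => (1:ℝ))|ℱ (m + d)]) ω *
          (ℙ[C.indicator (fun _ => (1:ℝ))|ℱ (m + d)]) ω) Filter.atTop
        (nhds ((ℙ[A.indicator (fun _ => (1:ℝ))|MeasurableSpace.comap V inferInstance]) ω *
          (ℙ[C.indicator (fun _ => (1:ℝ))|MeasurableSpace.comap V inferInstance]) ω)) :=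
      (hω2.comp (Filter.tendsto_add_atTop_nat d)).mul
        (hω3.comp (Filter.tendsto_add_atTop_nat d))
    have t1' : Filter.Tendsto (fun m : ℕ =>
        (ℙ[A.indicator (fun _ => (1:ℝ))|ℱ (m + d)]) ω *
          (ℙ[C.indicator (fun _ => (1:ℝ))|ℱ (m + d)]) ω) Filter.atTop
        (nhds ((ℙ[(A ∩ C).indicator (fun _ => (1:ℝ))|MeasurableSpace.comap V inferInstance]) ω)) := by
      refine t1.congr (fun m => ?_)
      exact (hωeq m).symm
    exact tendsto_nhds_unique t2 t1'
  -- notation for the conditional expectations given σ(V)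
  set cE : Set Ω → Ω → ℝ := fun A =>
    ℙ[A.indicator (fun _ => (1:ℝ))|MeasurableSpace.comap V inferInstance] with hcEdef
  -- the pull-out identity
  have I1 : ∀ (A : Set Ω), MeasurableSet A → ∀ (Cs : Set Ω), MeasurableSet Cs →
      ∀ B : Set Ω, MeasurableSet[MeasurableSpace.comap V inferInstance] B →
      ∫ ω in B, cE A ω * cE Cs ω ∂ℙ = ∫ ω in Cs ∩ B, cE A ω ∂ℙ := by
    intro A hAm0 Cs hCsm0 B hB
    have hBm0 : MeasurableSet B := hmVle B hB
    have hf_sm : StronglyMeasurable[MeasurableSpace.comap V inferInstance]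
        (fun ω => B.indicator (fun _ => (1:ℝ)) ω * cE A ω) :=
      (stronglyMeasurable_const.indicator hB).mul stronglyMeasurable_condExp
    have hg_int : Integrable (Cs.indicator (fun _ => (1:ℝ))) ℙ :=
      (integrable_const (1:ℝ)).indicator hCsm0
    have hfg_int : Integrable ((fun ω => B.indicator (fun _ => (1:ℝ)) ω * cE A ω) *
        Cs.indicator (fun _ => (1:ℝ))) ℙ := by
      refine Integrable.bdd_mul (c := 1) hg_int
        ((hf_sm.mono hmVle).aestronglyMeasurable) ?_
      filter_upwards [aux_condexp_indicator_norm_le ℙ hmVle ((integrable_const (1:ℝ)).indicator hAm0)] with ω hω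
      rw [norm_mul]
      calc ‖B.indicator (fun _ => (1:ℝ)) ω‖ * ‖cE A ω‖
          ≤ 1 * 1 := by
            refine mul_le_mul ?_ hω (norm_nonneg _) zero_le_one
            rw [Set.indicator_apply]
            split_ifs <;> simp
      _ = 1 := by ring
    have hpull := condExp_mul_of_stronglyMeasurable_left hf_sm hfg_int hg_int
    have hint2 : ∫ ω, (B.indicator (fun _ => (1:ℝ)) ω * cE A ω) * cE Cs ω ∂ℙ
        = ∫ ω, (B.indicator (fun _ => (1:ℝ)) ω * cE A ω) *
            Cs.indicator (fun _ => (1:ℝ)) ω ∂ℙ :=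
      (integral_congr_ae hpull.symm).trans (integral_condExp hmVle)
    calc ∫ ω in B, cE A ω * cE Cs ω ∂ℙ
        = ∫ ω, B.indicator (fun ω => cE A ω * cE Cs ω) ω ∂ℙ :=
          (integral_indicator hBm0).symm
      _ = ∫ ω, (B.indicator (fun _ => (1:ℝ)) ω * cE A ω) * cE Cs ω ∂ℙ := by
          congr 1; funext ω
          by_cases hb : ω ∈ B <;> simp [Set.indicator_apply, hb]
      _ = ∫ ω, (B.indicator (fun _ => (1:ℝ)) ω * cE A ω) *
            Cs.indicator (fun _ => (1:ℝ)) ω ∂ℙ := hint2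
      _ = ∫ ω, (Cs ∩ B).indicator (fun ω => cE A ω) ω ∂ℙ := by
          congr 1; funext ω
          by_cases hb : ω ∈ B <;> by_cases hc : ω ∈ Cs <;>
            simp [Set.indicator_apply, hb, hc]
      _ = ∫ ω in Cs ∩ B, cE A ω ∂ℙ := integral_indicator (hCsm0.inter hBm0)
  -- base case of the double π-system induction
  have base : ∀ (A C : Set Ω), (∃ d, MeasurableSet[𝓐 d] A) → (∃ d, MeasurableSet[𝓒 d] C) →
      ∀ B : Set Ω, MeasurableSet[MeasurableSpace.comap V inferInstance] B →
      (ℙ (A ∩ C ∩ B)).toReal = ∫ ω in B, cE A ω * cE C ω ∂ℙ := by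
    rintro A C ⟨d1, hA⟩ ⟨d2, hC⟩ B hB
    have hAm0 : MeasurableSet A := h𝓐le d1 A hA
    have hCm0 : MeasurableSet C := h𝓒le d2 C hC
    have hstep := stepB (max d1 d2) A C (hmonoU (le_max_left d1 d2) A hA)
      (hmonoW (le_max_right d1 d2) C hC)
    have h6 : ∫ ω in B, cE A ω * cE C ω ∂ℙ
        = ∫ ω in B, (ℙ[(A ∩ C).indicator (fun _ => (1:ℝ))|
            MeasurableSpace.comap V inferInstance]) ω ∂ℙ :=
      setIntegral_congr_ae (hmVle B hB) (hstep.mono (fun ω hω _ => hω))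
    rw [h6, setIntegral_condExp hmVle ((integrable_const (1:ℝ)).indicator (hAm0.inter hCm0)) hB,
      aux_setIntegral_indicator_one ℙ (hAm0.inter hCm0)]
  -- π-systems and generation
  have hgenW : (MeasurableSpace.comap W inferInstance : MeasurableSpace Ω)
      = MeasurableSpace.generateFrom {S | ∃ d, MeasurableSet[𝓒 d] S} := by
    rw [← hsupW]
    exact MeasurableSpace.measurableSpace_iSup_eq 𝓒
  have hgenU : (MeasurableSpace.comap U inferInstance : MeasurableSpace Ω)
      = MeasurableSpace.generateFrom {S | ∃ d, MeasurableSet[𝓐 d] S} := by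
    rw [← hsupU]
    exact MeasurableSpace.measurableSpace_iSup_eq 𝓐
  have hpiW : IsPiSystem {S : Set Ω | ∃ d, MeasurableSet[𝓒 d] S} := by
    rintro S ⟨d1, h1⟩ T ⟨d2, h2⟩ -
    exact ⟨max d1 d2, (hmonoW (le_max_left d1 d2) S h1).inter
      (hmonoW (le_max_right d1 d2) T h2)⟩
  have hpiU : IsPiSystem {S : Set Ω | ∃ d, MeasurableSet[𝓐 d] S} := by
    rintro S ⟨d1, h1⟩ T ⟨d2, h2⟩ -
    exact ⟨max d1 d2, (hmonoU (le_max_left d1 d2) S h1).inter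
      (hmonoU (le_max_right d1 d2) T h2)⟩
  -- first Dynkin extension: over C, for A in the π-system
  have ext1 : ∀ (A : Set Ω), (∃ d, MeasurableSet[𝓐 d] A) →
      ∀ (C : Set Ω), MeasurableSet[MeasurableSpace.comap W inferInstance] C →
      ∀ B : Set Ω, MeasurableSet[MeasurableSpace.comap V inferInstance] B →
      (ℙ (A ∩ C ∩ B)).toReal = ∫ ω in C ∩ B, cE A ω ∂ℙ := by
    rintro A ⟨dA, hAd⟩ C hCW
    have hAm0 : MeasurableSet A := h𝓐le dA A hAd
    refine MeasurableSpace.induction_on_inter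
      (m := MeasurableSpace.comap W inferInstance)
      (C := fun C _ => ∀ B : Set Ω,
        MeasurableSet[MeasurableSpace.comap V inferInstance] B →
        (ℙ (A ∩ C ∩ B)).toReal = ∫ ω in C ∩ B, cE A ω ∂ℙ)
      hgenW hpiW ?_ ?_ ?_ ?_ _ hCW
    · -- empty
      intro B hB
      simp
    · -- basic
      rintro C ⟨dC, hCd⟩ B hB
      have hCm0 : MeasurableSet C := h𝓒le dC C hCd
      rw [base A C ⟨dA, hAd⟩ ⟨dC, hCd⟩ B hB]
      exact I1 A hAm0 C hCm0 B hB
    · -- complement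
      intro C hCW' hC B hB
      have hCm0 : MeasurableSet C := hmWle C hCW'
      have hBm0 : MeasurableSet B := hmVle B hB
      have hBint : ∫ ω in B, cE A ω ∂ℙ = (ℙ (A ∩ B)).toReal := by
        rw [setIntegral_condExp hmVle ((integrable_const (1:ℝ)).indicator hAm0) hB,
          aux_setIntegral_indicator_one ℙ hAm0]
      have hd1 : Disjoint (A ∩ C ∩ B) (A ∩ Cᶜ ∩ B) := by
        refine Set.disjoint_left.2 ?_
        rintro ω ⟨⟨-, hc⟩, -⟩ ⟨⟨-, hnc⟩, -⟩
        exact hnc hc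
      have hsplitmu : ℙ (A ∩ B) = ℙ (A ∩ C ∩ B) + ℙ (A ∩ Cᶜ ∩ B) := by
        rw [show A ∩ B = (A ∩ C ∩ B) ∪ (A ∩ Cᶜ ∩ B) from by
          ext ω; simp only [Set.mem_union, Set.mem_inter_iff, Set.mem_compl_iff]; tauto]
        exact measure_union hd1 ((hAm0.inter hCm0.compl).inter hBm0)
      have hd2 : Disjoint (C ∩ B) (Cᶜ ∩ B) := by
        refine Set.disjoint_left.2 ?_
        rintro ω ⟨hc, -⟩ ⟨hnc, -⟩
        exact hnc hc
      have hu2 : (C ∩ B) ∪ (Cᶜ ∩ B) = B := by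
        ext ω; simp only [Set.mem_union, Set.mem_inter_iff, Set.mem_compl_iff]; tauto
      have hsplitInt : ∫ ω in B, cE A ω ∂ℙ
          = ∫ ω in C ∩ B, cE A ω ∂ℙ + ∫ ω in Cᶜ ∩ B, cE A ω ∂ℙ := by
        calc ∫ ω in B, cE A ω ∂ℙ = ∫ ω in (C ∩ B) ∪ (Cᶜ ∩ B), cE A ω ∂ℙ := by rw [hu2]
        _ = ∫ ω in C ∩ B, cE A ω ∂ℙ + ∫ ω in Cᶜ ∩ B, cE A ω ∂ℙ :=
          setIntegral_union hd2 (hCm0.compl.inter hBm0)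
            integrable_condExp.integrableOn integrable_condExp.integrableOn
      have ht1 : (ℙ (A ∩ B)).toReal
          = (ℙ (A ∩ C ∩ B)).toReal + (ℙ (A ∩ Cᶜ ∩ B)).toReal := by
        rw [hsplitmu, ENNReal.toReal_add (measure_ne_top _ _) (measure_ne_top _ _)]
      have hCB := hC B hB
      linarith [hBint, hsplitInt, ht1, hCB]
    · -- countable disjoint union
      intro f hdisj hmeasW hf B hB
      have hfm0 : ∀ i, MeasurableSet (f i) := fun i => hmWle (f i) (hmeasW i)
      have hBm0 : MeasurableSet B := hmVle B hB
      have hL : (ℙ (A ∩ (⋃ i, f i) ∩ B)).toReal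
          = ∑' i, (ℙ (A ∩ f i ∩ B)).toReal := by
        rw [show A ∩ (⋃ i, f i) ∩ B = ⋃ i, (A ∩ f i ∩ B) from by
          ext ω; simp only [Set.mem_inter_iff, Set.mem_iUnion]; tauto]
        rw [measure_iUnion ?_ (fun i => (hAm0.inter (hfm0 i)).inter hBm0)]
        · exact ENNReal.tsum_toReal_eq (fun i => measure_ne_top _ _)
        · intro i j hij
          refine Set.disjoint_left.2 ?_
          rintro ω ⟨⟨-, hfi⟩, -⟩ ⟨⟨-, hfj⟩, -⟩
          exact Set.disjoint_left.1 (hdisj hij) hfi hfj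
      have hR : ∫ ω in (⋃ i, f i) ∩ B, cE A ω ∂ℙ
          = ∑' i, ∫ ω in f i ∩ B, cE A ω ∂ℙ := by
        rw [show (⋃ i, f i) ∩ B = ⋃ i, (f i ∩ B) from by
          ext ω; simp only [Set.mem_inter_iff, Set.mem_iUnion]; tauto]
        refine integral_iUnion (fun i => (hfm0 i).inter hBm0) ?_
          integrable_condExp.integrableOn
        intro i j hij
        refine Set.disjoint_left.2 ?_
        rintro ω ⟨hfi, -⟩ ⟨hfj, -⟩
        exact Set.disjoint_left.1 (hdisj hij) hfi hfj
      rw [hL, hR]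
      exact tsum_congr (fun i => hf i B hB)
  -- second Dynkin extension: over A, for C measurable
  have ext2 : ∀ (C : Set Ω), MeasurableSet[MeasurableSpace.comap W inferInstance] C →
      ∀ (A : Set Ω), MeasurableSet[MeasurableSpace.comap U inferInstance] A →
      ∀ B : Set Ω, MeasurableSet[MeasurableSpace.comap V inferInstance] B →
      (ℙ (A ∩ C ∩ B)).toReal = ∫ ω in A ∩ B, cE C ω ∂ℙ := by
    intro C hCW
    have hCm0 : MeasurableSet C := hmWle C hCW
    intro A hAU
    refine MeasurableSpace.induction_on_inter
      (m := MeasurableSpace.comap U inferInstance)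
      (C := fun A _ => ∀ B : Set Ω,
        MeasurableSet[MeasurableSpace.comap V inferInstance] B →
        (ℙ (A ∩ C ∩ B)).toReal = ∫ ω in A ∩ B, cE C ω ∂ℙ)
      hgenU hpiU ?_ ?_ ?_ ?_ _ hAU
    · -- empty
      intro B hB
      simp
    · -- basic
      rintro A ⟨dA, hAd⟩ B hB
      have hAm0 : MeasurableSet A := h𝓐le dA A hAd
      rw [ext1 A ⟨dA, hAd⟩ C hCW B hB]
      have e1 : ∫ ω in C ∩ B, cE A ω ∂ℙ = ∫ ω in B, cE A ω * cE C ω ∂ℙ :=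
        (I1 A hAm0 C hCm0 B hB).symm
      have e2 : ∫ ω in B, cE A ω * cE C ω ∂ℙ = ∫ ω in B, cE C ω * cE A ω ∂ℙ := by
        refine setIntegral_congr_fun (hmVle B hB) (fun ω _ => ?_)
        ring
      rw [e1, e2, I1 C hCm0 A hAm0 B hB]
    · -- complement
      intro A hAU' hA B hB
      have hAm0 : MeasurableSet A := hmUle A hAU'
      have hBm0 : MeasurableSet B := hmVle B hB
      have hBint : ∫ ω in B, cE C ω ∂ℙ = (ℙ (C ∩ B)).toReal := by
        rw [setIntegral_condExp hmVle ((integrable_const (1:ℝ)).indicator hCm0) hB,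
          aux_setIntegral_indicator_one ℙ hCm0]
      have hd1 : Disjoint (A ∩ C ∩ B) (Aᶜ ∩ C ∩ B) := by
        refine Set.disjoint_left.2 ?_
        rintro ω ⟨⟨ha, -⟩, -⟩ ⟨⟨hna, -⟩, -⟩
        exact hna ha
      have hsplitmu : ℙ (C ∩ B) = ℙ (A ∩ C ∩ B) + ℙ (Aᶜ ∩ C ∩ B) := by
        rw [show C ∩ B = (A ∩ C ∩ B) ∪ (Aᶜ ∩ C ∩ B) from by
          ext ω; simp only [Set.mem_union, Set.mem_inter_iff, Set.mem_compl_iff]; tauto]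
        exact measure_union hd1 ((hAm0.compl.inter hCm0).inter hBm0)
      have hd2 : Disjoint (A ∩ B) (Aᶜ ∩ B) := by
        refine Set.disjoint_left.2 ?_
        rintro ω ⟨ha, -⟩ ⟨hna, -⟩
        exact hna ha
      have hu2 : (A ∩ B) ∪ (Aᶜ ∩ B) = B := by
        ext ω; simp only [Set.mem_union, Set.mem_inter_iff, Set.mem_compl_iff]; tauto
      have hsplitInt : ∫ ω in B, cE C ω ∂ℙ
          = ∫ ω in A ∩ B, cE C ω ∂ℙ + ∫ ω in Aᶜ ∩ B, cE C ω ∂ℙ := by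
        calc ∫ ω in B, cE C ω ∂ℙ = ∫ ω in (A ∩ B) ∪ (Aᶜ ∩ B), cE C ω ∂ℙ := by rw [hu2]
        _ = ∫ ω in A ∩ B, cE C ω ∂ℙ + ∫ ω in Aᶜ ∩ B, cE C ω ∂ℙ :=
          setIntegral_union hd2 (hAm0.compl.inter hBm0)
            integrable_condExp.integrableOn integrable_condExp.integrableOn
      have ht1 : (ℙ (C ∩ B)).toReal
          = (ℙ (A ∩ C ∩ B)).toReal + (ℙ (Aᶜ ∩ C ∩ B)).toReal := by
        rw [hsplitmu, ENNReal.toReal_add (measure_ne_top _ _) (measure_ne_top _ _)]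
      have hAB := hA B hB
      linarith [hBint, hsplitInt, ht1, hAB]
    · -- countable disjoint union
      intro f hdisj hmeasU hf B hB
      have hfm0 : ∀ i, MeasurableSet (f i) := fun i => hmUle (f i) (hmeasU i)
      have hBm0 : MeasurableSet B := hmVle B hB
      have hL : (ℙ ((⋃ i, f i) ∩ C ∩ B)).toReal
          = ∑' i, (ℙ (f i ∩ C ∩ B)).toReal := by
        rw [show (⋃ i, f i) ∩ C ∩ B = ⋃ i, (f i ∩ C ∩ B) from by
          ext ω; simp only [Set.mem_inter_iff, Set.mem_iUnion]; tauto]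
        rw [measure_iUnion ?_ (fun i => ((hfm0 i).inter hCm0).inter hBm0)]
        · exact ENNReal.tsum_toReal_eq (fun i => measure_ne_top _ _)
        · intro i j hij
          refine Set.disjoint_left.2 ?_
          rintro ω ⟨⟨hfi, -⟩, -⟩ ⟨⟨hfj, -⟩, -⟩
          exact Set.disjoint_left.1 (hdisj hij) hfi hfj
      have hR : ∫ ω in (⋃ i, f i) ∩ B, cE C ω ∂ℙ
          = ∑' i, ∫ ω in f i ∩ B, cE C ω ∂ℙ := by
        rw [show (⋃ i, f i) ∩ B = ⋃ i, (f i ∩ B) from by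
          ext ω; simp only [Set.mem_inter_iff, Set.mem_iUnion]; tauto]
        refine integral_iUnion (fun i => (hfm0 i).inter hBm0) ?_
          integrable_condExp.integrableOn
        intro i j hij
        refine Set.disjoint_left.2 ?_
        rintro ω ⟨hfi, -⟩ ⟨hfj, -⟩
        exact Set.disjoint_left.1 (hdisj hij) hfi hfj
      rw [hL, hR]
      exact tsum_congr (fun i => hf i B hB)
  -- conclusion
  intro sA hsA sC hsC
  have hsAm0 : MeasurableSet sA := hmUle sA hsA
  have hsCm0 : MeasurableSet sC := hmWle sC hsC
  have hfinal : ∀ B : Set Ω, MeasurableSet[MeasurableSpace.comap V inferInstance] B →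
      ∫ ω in B, cE sA ω * cE sC ω ∂ℙ = ∫ ω in B, (sA ∩ sC).indicator (fun _ => (1:ℝ)) ω ∂ℙ := by
    intro B hB
    have e2 : ∫ ω in B, cE sA ω * cE sC ω ∂ℙ = ∫ ω in B, cE sC ω * cE sA ω ∂ℙ := by
      refine setIntegral_congr_fun (hmVle B hB) (fun ω _ => ?_)
      ring
    rw [e2, I1 sC hsCm0 sA hsAm0 B hB, ← ext2 sC hsC sA hsA B hB,
      aux_setIntegral_indicator_one ℙ (hsAm0.inter hsCm0)]
  have hind : (fun ω => sA.indicator (fun _ => (1:ℝ)) ω * sC.indicator (fun _ => (1:ℝ)) ω)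
      = (sA ∩ sC).indicator (fun _ => (1:ℝ)) := by
    funext ω
    by_cases ha : ω ∈ sA <;> by_cases hc : ω ∈ sC <;>
      simp [Set.indicator_apply, ha, hc]
  have hmain := ae_eq_condExp_of_forall_setIntegral_eq (μ := ℙ) hmVle
    (f := (sA ∩ sC).indicator (fun _ => (1:ℝ)))
    (g := fun ω => cE sA ω * cE sC ω)
    ((integrable_const (1:ℝ)).indicator (hsAm0.inter hsCm0))
    (fun S _ _ => (Integrable.bdd_mul (c := 1) integrable_condExp
      ((stronglyMeasurable_condExp.mono hmVle).aestronglyMeasurable)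
      (aux_condexp_indicator_norm_le ℙ hmVle ((integrable_const (1:ℝ)).indicator hsAm0))).integrableOn)
    (fun S hS _ => hfinal S hS)
    ((stronglyMeasurable_condExp.mul stronglyMeasurable_condExp).aestronglyMeasurable)
  rw [hind]
  exact hmain.symm
end
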